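/- Let (l≺, r≺, l≻, r≻, β₁, β₂, V) be a bimodule of a BiHom-dendriform algebra (A, ≺, ≻, α₁, α₂). Then A ⊕ V carries a BiHom-dendriform algebra structure given by (x+u)≺'(y+v) = x≺y + l≺(x)v + r≺(y)u and (x+u)≻'(y+v) = x≻y + l≻(x)v + r≻(y)u, with structure maps α₁⊕β₁ and α₂⊕β₂. -/

import Mathlib

universe u

section Defs
variable {A : Type*} {V : Type*} [AddCommGroup A] [AddCommGroup V]

/-- Commuting pair of maps. -/
def BHComm2 (a1 a2 : A → A) : Prop := ∀ x, a1 (a2 x) = a2 (a1 x)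

/-- Multiplicativity of a map with respect to a binary operation. -/
def BHMultip (m : A → A → A) (a : A → A) : Prop := ∀ x y, a (m x y) = m (a x) (a y)

/-- BiHom-associative algebra. -/
def BHAssocAlg (m : A → A → A) (a1 a2 : A → A) : Prop :=
  BHComm2 a1 a2 ∧ BHMultip m a1 ∧ BHMultip m a2 ∧
  ∀ x y z, m (a1 x) (m y z) = m (m x y) (a2 z)

/-- Bimodule of a BiHom-associative algebra. -/
def BHAssocBimod (m : A → A → A) (a1 a2 : A → A)
    (l r : A → V → V) (b1 b2 : V → V) : Prop :=
  BHComm2 b1 b2 ∧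
  (∀ x y v, l (m x y) (b2 v) = l (a1 x) (l y v)) ∧
  (∀ x y v, r (m x y) (b1 v) = r (a2 y) (r x v)) ∧
  (∀ x y v, l (a1 x) (r y v) = r (a2 y) (l x v)) ∧
  (∀ x v, b1 (l x v) = l (a1 x) (b1 v)) ∧
  (∀ x v, b1 (r x v) = r (a1 x) (b1 v)) ∧
  (∀ x v, b2 (l x v) = l (a2 x) (b2 v)) ∧
  (∀ x v, b2 (r x v) = r (a2 x) (b2 v))

/-- BiHom-Lie algebra. -/
def BHLieAlg (br : A → A → A) (a1 a2 : A → A) : Prop :=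
  BHComm2 a1 a2 ∧ BHMultip br a1 ∧ BHMultip br a2 ∧
  (∀ x y, br (a2 x) (a1 y) = - br (a2 y) (a1 x)) ∧
  (∀ x y z,
    br (a2 (a2 x)) (br (a2 y) (a1 z)) + br (a2 (a2 z)) (br (a2 x) (a1 y)) +
      br (a2 (a2 y)) (br (a2 z) (a1 x)) = 0)

/-- Representation of a BiHom-Lie algebra. -/
def BHLieRep (br : A → A → A) (a1 a2 : A → A) (ρ : A → V → V) (b1 b2 : V → V) : Prop :=
  BHComm2 b1 b2 ∧
  (∀ x y v, ρ (br (a2 x) y) (b2 v) = ρ (a1 (a2 x)) (ρ y v) - ρ (a2 y) (ρ (a1 x) v)) ∧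
  (∀ x v, b1 (ρ x v) = ρ (a1 x) (b1 v)) ∧
  (∀ x v, b2 (ρ x v) = ρ (a2 x) (b2 v))

/-- BiHom-Leibniz identity. -/
def BHLeibniz (m br : A → A → A) (a1 a2 : A → A) : Prop :=
  ∀ x y z, br (a1 (a2 x)) (m y z) = m (br (a2 x) y) (a2 z) + m (a2 y) (br (a1 x) z)

/-- Noncommutative BiHom-Poisson algebra. -/
def BHNCPoisson (m br : A → A → A) (a1 a2 : A → A) : Prop :=
  BHAssocAlg m a1 a2 ∧ BHLieAlg br a1 a2 ∧ BHLeibniz m br a1 a2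

/-- Representation of a noncommutative BiHom-Poisson algebra. -/
def BHPoissonRep (m br : A → A → A) (a1 a2 : A → A)
    (l r ρ : A → V → V) (b1 b2 : V → V) : Prop :=
  BHAssocBimod m a1 a2 l r b1 b2 ∧ BHLieRep br a1 a2 ρ b1 b2 ∧
  (∀ x y v, l (br (a2 x) y) (b2 v) = ρ (a1 (a2 x)) (l y v) - l (a2 y) (ρ (a1 x) v)) ∧
  (∀ x y v, r (br (a1 x) y) (b2 v) = ρ (a1 (a2 x)) (r y v) - r (a2 y) (ρ (a2 x) v)) ∧
  (∀ x y v, ρ (m x y) (b1 (b2 v)) = l (a1 x) (ρ y (b1 v)) + r (a1 y) (ρ x (b2 v)))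

/-- BiHom-pre-Lie algebra. -/
def BHPreLieAlg (st : A → A → A) (a1 a2 : A → A) : Prop :=
  BHComm2 a1 a2 ∧ BHMultip st a1 ∧ BHMultip st a2 ∧
  ∀ x y z,
    st (st (a2 x) (a1 y)) (a2 z) - st (a1 (a2 x)) (st (a1 y) z) =
      st (st (a2 y) (a1 x)) (a2 z) - st (a1 (a2 y)) (st (a1 x) z)

/-- Bimodule of a BiHom-pre-Lie algebra. -/
def BHPreLieBimod (st : A → A → A) (a1 a2 : A → A)
    (lst rst : A → V → V) (b1 b2 : V → V) : Prop :=
  BHComm2 b1 b2 ∧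
  (∀ x y v, lst (st (a2 x) (a1 y) - st (a2 y) (a1 x)) (b2 v) =
      lst (a1 (a2 x)) (lst (a1 y) v) - lst (a1 (a2 y)) (lst (a1 x) v)) ∧
  (∀ x y v, rst (a2 y) (lst (a2 x) (b1 v) - rst (a1 x) (b2 v)) =
      lst (a1 (a2 x)) (rst y (b1 v)) - rst (st (a1 x) y) (b1 (b2 v))) ∧
  (∀ x v, b1 (lst x v) = lst (a1 x) (b1 v)) ∧
  (∀ x v, b1 (rst x v) = rst (a1 x) (b1 v)) ∧
  (∀ x v, b2 (lst x v) = lst (a2 x) (b2 v)) ∧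
  (∀ x v, b2 (rst x v) = rst (a2 x) (b2 v))

/-- BiHom-dendriform algebra. -/
def BHDendAlg (p s : A → A → A) (a1 a2 : A → A) : Prop :=
  BHComm2 a1 a2 ∧ BHMultip p a1 ∧ BHMultip p a2 ∧ BHMultip s a1 ∧ BHMultip s a2 ∧
  (∀ x y z, p (p x y) (a2 z) = p (a1 x) (p y z + s y z)) ∧
  (∀ x y z, p (s x y) (a2 z) = s (a1 x) (p y z)) ∧
  (∀ x y z, s (a1 x) (s y z) = s (p x y + s x y) (a2 z))

/-- Bimodule of a BiHom-dendriform algebra. -/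
def BHDendBimod (p s : A → A → A) (a1 a2 : A → A)
    (lp rp ls rs : A → V → V) (b1 b2 : V → V) : Prop :=
  BHComm2 b1 b2 ∧
  (∀ x y v, lp (p x y) (b2 v) = lp (a1 x) (lp y v + ls y v)) ∧
  (∀ x y v, rp (a2 x) (lp y v) = lp (a1 y) (rp x v + rs x v)) ∧
  (∀ x y v, rp (a2 y) (rp x v) = rp (p x y + s x y) (b1 v)) ∧
  (∀ x y v, lp (s x y) (b2 v) = ls (a1 x) (lp y v)) ∧
  (∀ x y v, rp (a2 x) (ls y v) = ls (a1 y) (rp x v)) ∧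
  (∀ x y v, rp (a2 x) (rs y v) = rs (p y x) (b1 v)) ∧
  (∀ x y v, ls (p x y + s x y) (b2 v) = ls (a1 x) (ls y v)) ∧
  (∀ x y v, rs (a2 x) (lp y v + ls y v) = ls (a1 y) (rs x v)) ∧
  (∀ x y v, rs (a2 x) (rp y v + rs y v) = rs (s y x) (b1 v)) ∧
  (∀ x v, b1 (lp x v) = lp (a1 x) (b1 v)) ∧
  (∀ x v, b1 (rp x v) = rp (a1 x) (b1 v)) ∧
  (∀ x v, b2 (lp x v) = lp (a2 x) (b2 v)) ∧
  (∀ x v, b2 (rp x v) = rp (a2 x) (b2 v)) ∧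
  (∀ x v, b1 (ls x v) = ls (a1 x) (b1 v)) ∧
  (∀ x v, b1 (rs x v) = rs (a1 x) (b1 v)) ∧
  (∀ x v, b2 (ls x v) = ls (a2 x) (b2 v)) ∧
  (∀ x v, b2 (rs x v) = rs (a2 x) (b2 v))

/-- The three compatibility conditions of a noncommutative BiHom-pre-Poisson algebra. -/
def BHPPCompat (p s st : A → A → A) (a1 a2 : A → A) : Prop :=
  (∀ x y z, p (st (a2 x) (a1 y) - st (a2 y) (a1 x)) (a2 z) =
      st (a1 (a2 x)) (p (a1 y) z) - p (a1 (a2 y)) (st (a1 x) z)) ∧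
  (∀ x y z, s (a2 x) (st (a1 (a2 y)) (a1 z) - st (a2 z) (a1 (a1 y))) =
      st (a1 (a2 (a2 y))) (s x (a1 z)) - s (st (a2 (a2 y)) x) (a1 (a2 z))) ∧
  (∀ x y z, st (p (a2 x) (a1 y) + s (a2 x) (a1 y)) (a2 z) =
      s (st (a2 x) (a1 z)) (a2 y) + p (a1 (a2 x)) (st (a1 y) z))

/-- Noncommutative BiHom-pre-Poisson algebra. -/
def BHPrePoisson (p s st : A → A → A) (a1 a2 : A → A) : Prop :=
  BHDendAlg p s a1 a2 ∧ BHPreLieAlg st a1 a2 ∧ BHPPCompat p s st a1 a2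

/-- Bimodule of a noncommutative BiHom-pre-Poisson algebra. -/
def BHPrePoissonBimod (p s st : A → A → A) (a1 a2 : A → A)
    (lp rp ls rs lst rst : A → V → V) (b1 b2 : V → V) : Prop :=
  BHPreLieBimod st a1 a2 lst rst b1 b2 ∧
  BHDendBimod p s a1 a2 lp rp ls rs b1 b2 ∧
  (∀ x y v, lp (st (a2 x) (a1 y) - st (a2 y) (a1 x)) (b2 v) =
      lst (a1 (a2 x)) (lp (a1 y) v) - lp (a1 (a2 y)) (lst (a1 x) v)) ∧
  (∀ x y v, rp (a2 x) (lst (a2 y) (b1 v) - rst (a1 y) (b2 v)) =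
      lst (a1 (a2 y)) (rp x (b1 v)) - rp (st (a1 y) x) (b1 (b2 v))) ∧
  (∀ x y v, - rp (a2 x) (lst (a2 y) (b1 v) - rst (a1 y) (b2 v)) =
      rst (p (a1 y) x) (b1 (b2 v)) - lp (a1 (a2 y)) (rst x (b1 v))) ∧
  (∀ x y v, ls (a2 x) (lst (a1 (a2 y)) (b1 v) - rst (a1 (a1 y)) (b2 v)) =
      lst (a1 (a2 (a2 y))) (ls x (b1 v)) - ls (st (a2 (a2 y)) x) (b1 (b2 v))) ∧
  (∀ x y v, rs (st (a2 (a1 x)) (a1 y) - st (a2 y) (a1 (a1 x))) (b2 v) =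
      lst (a1 (a2 (a2 x))) (rs (a1 y) v) - rs (a1 (a2 y)) (lst (a2 (a2 x)) v)) ∧
  (∀ x y v, - ls (a2 x) (lst (a2 y) (b1 (b1 v)) - rst (a1 y) (b2 (b1 v))) =
      rst (s x (a1 y)) (b1 (b2 (b2 v))) - rs (a1 (a2 y)) (rst x (b2 (b2 v)))) ∧
  (∀ x y v, lst (p (a2 x) (a1 y) + s (a2 x) (a1 y)) (b2 v) =
      rs (a2 y) (lst (a2 x) (b1 v)) + lp (a1 (a2 x)) (lst (a1 y) v)) ∧
  (∀ x y v, rst (a2 x) (lp (a2 y) (b1 v) + ls (a2 y) (b1 v)) =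
      ls (st (a2 y) (a1 x)) (b2 v) + lp (a1 (a2 y)) (rst x (b1 v))) ∧
  (∀ x y v, rst (a2 x) (rp (a1 y) (b2 v) + rs (a1 y) (b2 v)) =
      rs (a2 y) (rst (a1 x) (b2 v)) + rp (st (a1 y) x) (b1 (b2 v)))

end Defs

/-!
Each axiom for `A ⊕ V` splits into its `A`-component, which is the same axiom for `A`, and its
`V`-component. For the three dendriform identities the `V`-component is a sum of three terms, each
involving the `V`-part of just one of the three arguments; once the module argument is expanded
additively, each term is one of the nine bimodule conditions. Multiplicativity and commutation of
the structure maps come from the intertwining conditions in the same way.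
-/

section Semidirect

variable {A V : Type*}

theorem BHComm2.prodMap {a1 a2 : A → A} {b1 b2 : V → V} (ha : BHComm2 a1 a2)
    (hb : BHComm2 b1 b2) : BHComm2 (Prod.map a1 b1) (Prod.map a2 b2) :=
  fun q => Prod.ext (ha q.1) (hb q.2)

variable [AddCommMonoid V]

def semidirectOp (m : A → A → A) (l r : A → V →+ V) (q w : A × V) : A × V :=
  (m q.1 w.1, l q.1 w.2 + r w.1 q.2)

theorem BHMultip.semidirect {m : A → A → A} {a : A → A} {l r : A → V →+ V} {b : V →+ V}
    (hm : BHMultip m a) (hl : ∀ x v, b (l x v) = l (a x) (b v))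
    (hr : ∀ x v, b (r x v) = r (a x) (b v)) :
    BHMultip (semidirectOp m l r) (Prod.map a b) :=
  fun q w => Prod.ext (hm q.1 w.1) (by simp [semidirectOp, hl, hr])

end Semidirect

theorem BHDendAlg.semidirect {A V : Type*} [AddCommGroup A] [AddCommGroup V]
    {p s : A → A → A} {a1 a2 : A → A} {lp rp ls rs : A → V →+ V} {b1 b2 : V →+ V}
    (hA : BHDendAlg p s a1 a2)
    (hV : BHDendBimod p s a1 a2 (fun x => lp x) (fun x => rp x) (fun x => ls x)
      (fun x => rs x) b1 b2) :
    BHDendAlg (semidirectOp p lp rp) (semidirectOp s ls rs)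
      (Prod.map a1 b1) (Prod.map a2 b2) := by
  obtain ⟨hc, hp1, hp2, hs1, hs2, hpp, hsp, hss⟩ := hA
  obtain ⟨hbc, lp_p, rp_lp, rp_rp, lp_s, rp_ls, rp_rs, ls_dot, rs_l, rs_r,
    b1_lp, b1_rp, b2_lp, b2_rp, b1_ls, b1_rs, b2_ls, b2_rs⟩ := hV
  refine ⟨hc.prodMap hbc, hp1.semidirect b1_lp b1_rp, hp2.semidirect b2_lp b2_rp,
    hs1.semidirect b1_ls b1_rs, hs2.semidirect b2_ls b2_rs,
    fun u v w => Prod.ext (hpp u.1 v.1 w.1) ?_, fun u v w => Prod.ext (hsp u.1 v.1 w.1) ?_,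
    fun u v w => Prod.ext (hss u.1 v.1 w.1) ?_⟩
  · simp only [semidirectOp, Prod.map, Prod.fst_add, Prod.snd_add, map_add]
      at lp_p rp_lp rp_rp ⊢
    rw [lp_p, rp_lp, rp_rp]
    abel
  · simp only [semidirectOp, Prod.map, map_add] at lp_s rp_ls rp_rs ⊢
    rw [lp_s, rp_ls, rp_rs]
    abel
  · simp only [semidirectOp, Prod.map, Prod.fst_add, Prod.snd_add, map_add]
      at ls_dot rs_l rs_r ⊢
    rw [ls_dot, ← rs_l, ← rs_r]
    abel

theorem stmt_6 {K A V : Type*} [Field K] [AddCommGroup A] [Module K A]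
    [AddCommGroup V] [Module K V]
    (p s : A →ₗ[K] A →ₗ[K] A) (a1 a2 : A →ₗ[K] A)
    (lp rp ls rs : A →ₗ[K] V →ₗ[K] V) (b1 b2 : V →ₗ[K] V)
    (hA : BHDendAlg (fun x y => p x y) (fun x y => s x y) (fun x => a1 x) (fun x => a2 x))
    (hbim : BHDendBimod (fun x y => p x y) (fun x y => s x y) (fun x => a1 x) (fun x => a2 x)
      (fun x v => lp x v) (fun x v => rp x v) (fun x v => ls x v) (fun x v => rs x v) (fun v => b1 v) (fun v => b2 v)) :
    BHDendAlg
      (fun q w : A × V => (p q.1 w.1, lp q.1 w.2 + rp w.1 q.2))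
      (fun q w : A × V => (s q.1 w.1, ls q.1 w.2 + rs w.1 q.2))
      (fun q => (a1 q.1, b1 q.2)) (fun q => (a2 q.1, b2 q.2)) :=
  BHDendAlg.semidirect (lp := fun x => (lp x).toAddMonoidHom)
    (rp := fun x => (rp x).toAddMonoidHom) (ls := fun x => (ls x).toAddMonoidHom)
    (rs := fun x => (rs x).toAddMonoidHom) (b1 := b1.toAddMonoidHom) (b2 := b2.toAddMonoidHom)
    hA hbim
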